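/- For fixed z ∈ ℝ and fixed u ∈ L²(n) with |u(x)| ≤ M for n-a.e. x, the sequence (f^m(z, u))_{m ≥ 1} of truncated generators is nondecreasing in m and converges to f(z, u) as m → ∞. -/
import Mathlib


open MeasureTheory

/-- `g α y = (exp(α y) − α y − 1)/α`. -/
noncomputable def g (α y : ℝ) : ℝ := (Real.exp (α * y) - α * y - 1) / α

/-- `u ∈ L²(n) ∩ L^∞(n)`: measurable, square integrable and essentially bounded. -/
def MemL2Linf (n : Measure ℝ) (u : ℝ → ℝ) : Prop :=
  Measurable u ∧ Integrable (fun x => (u x) ^ 2) n ∧ ∃ K : ℝ, ∀ᵐ x ∂n, |u x| ≤ K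

/-- The generator
`f(z,u) = inf_{π ∈ 𝒞} [ (α/2)(πσ − (z + θ/α))² + ∫ g_α(u(x) − πβ(x)) dn(x) ] − θz − θ²/(2α)`. -/
noncomputable def gen (α θ σ : ℝ) (β : ℝ → ℝ) (𝒞 : Set ℝ) (n : Measure ℝ)
    (z : ℝ) (u : ℝ → ℝ) : ℝ :=
  sInf ((fun π => α / 2 * (π * σ - (z + θ / α)) ^ 2
      + ∫ x, g α (u x - π * β x) ∂n) '' 𝒞) - θ * z - θ ^ 2 / (2 * α)

/-- The truncated generator
`f^m(z,u) = inf_{π ∈ 𝒞} [ (α/2)(πσ − (z+θ/α))²·ρ_m(z)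
  + ∫_{|x| ≥ 1/m} g_α(u(x) − πβ(x))·ρ_M(u(x)) dn(x) ] − θz − θ²/(2α)`. -/
noncomputable def genT (α θ σ : ℝ) (β : ℝ → ℝ) (𝒞 : Set ℝ) (n : Measure ℝ)
    (ρ : ℕ → ℝ → ℝ) (ρM : ℝ → ℝ) (m : ℕ) (z : ℝ) (u : ℝ → ℝ) : ℝ :=
  sInf ((fun π => α / 2 * (π * σ - (z + θ / α)) ^ 2 * ρ m z
      + ∫ x in {x : ℝ | 1 / (m : ℝ) ≤ |x|}, g α (u x - π * β x) * ρM (u x) ∂n) '' 𝒞)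
    - θ * z - θ ^ 2 / (2 * α)

lemma exp_key (t : ℝ) : Real.exp t - t - 1 ≤ t ^ 2 * Real.exp |t| := by
  have hprod : Real.exp (-t) * Real.exp t = 1 := by rw [← Real.exp_add]; simp
  rcases le_or_gt 0 t with h | h
  · rw [abs_of_nonneg h]
    have key : (1 - t) * Real.exp t ≤ 1 := by
      nlinarith [Real.add_one_le_exp (-t), Real.exp_pos t]
    nlinarith [key, mul_le_mul_of_nonneg_left key h, Real.exp_pos t]
  · rw [abs_of_neg h]
    have h1 : Real.exp t ≤ 1 + t + t ^ 2 := by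
      nlinarith [mul_le_mul_of_nonneg_left (Real.add_one_le_exp (-t)) (Real.exp_pos t).le,
        Real.exp_pos t, sq_nonneg t]
    have h2 : (1 : ℝ) ≤ Real.exp (-t) := Real.one_le_exp (by linarith)
    nlinarith [sq_nonneg t]

lemma g_nonneg {α : ℝ} (hα : 0 < α) (y : ℝ) : 0 ≤ g α y := by
  have := Real.add_one_le_exp (α * y)
  unfold g
  apply div_nonneg _ hα.le
  linarith

lemma g_le {α B y : ℝ} (hα : 0 < α) (hy : |y| ≤ B) :
    g α y ≤ α * Real.exp (α * B) * y ^ 2 := by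
  have h1 := exp_key (α * y)
  have habs : |α * y| = α * |y| := by rw [abs_mul, abs_of_pos hα]
  have h2 : Real.exp |α * y| ≤ Real.exp (α * B) := by
    rw [habs]
    exact Real.exp_le_exp.2 (mul_le_mul_of_nonneg_left hy hα.le)
  unfold g
  rw [div_le_iff₀ hα]
  nlinarith [sq_nonneg y, Real.exp_pos |α * y|, sq_nonneg (α * y)]

theorem stmt14 (α θ σ M : ℝ) (hα : 0 < α) (hM : 0 < M)
    (n : Measure ℝ) [SigmaFinite n] (hn0 : n {0} = 0)
    (β : ℝ → ℝ) (hβ : MemL2Linf n β)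
    (𝒞 : Set ℝ) (h𝒞c : IsCompact 𝒞) (h𝒞ne : 𝒞.Nonempty) (h𝒞0 : (0:ℝ) ∈ 𝒞)
    (ρ : ℕ → ℝ → ℝ)
    (hρc : ∀ m : ℕ, 1 ≤ m → Continuous (ρ m))
    (hρ01 : ∀ m : ℕ, 1 ≤ m → ∀ z : ℝ, ρ m z ∈ Set.Icc (0:ℝ) 1)
    (hρone : ∀ m : ℕ, 1 ≤ m → ∀ z : ℝ, |z| ≤ (m : ℝ) → ρ m z = 1)
    (hρzero : ∀ m : ℕ, 1 ≤ m → ∀ z : ℝ, (m : ℝ) + 1 ≤ |z| → ρ m z = 0)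
    (hρmono : ∀ m : ℕ, 1 ≤ m → ∀ z : ℝ, ρ m z ≤ ρ (m + 1) z)
    (ρM : ℝ → ℝ) (hρMc : Continuous ρM)
    (hρM01 : ∀ y : ℝ, ρM y ∈ Set.Icc (0:ℝ) 1)
    (hρMone : ∀ y : ℝ, |y| ≤ M → ρM y = 1)
    (z : ℝ) (u : ℝ → ℝ) (hum : Measurable u)
    (hu2 : Integrable (fun x => (u x) ^ 2) n)
    (hub : ∀ᵐ x ∂n, |u x| ≤ M) :
    (∀ m : ℕ, 1 ≤ m →
      genT α θ σ β 𝒞 n ρ ρM m z u ≤ genT α θ σ β 𝒞 n ρ ρM (m + 1) z u) ∧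
    Filter.Tendsto (fun m : ℕ => genT α θ σ β 𝒞 n ρ ρM m z u)
      Filter.atTop (nhds (gen α θ σ β 𝒞 n z u)) := by
  classical
  obtain ⟨hβm, hβ2, K₀, hK₀⟩ := hβ
  set K : ℝ := max K₀ 0 with hKdef
  have hK0 : 0 ≤ K := le_max_right _ _
  have hK : ∀ᵐ x ∂n, |β x| ≤ K := hK₀.mono fun x hx => hx.trans (le_max_left _ _)
  obtain ⟨C, hC⟩ := isBounded_iff_forall_norm_le.1 h𝒞c.isBounded
  have hC0 : 0 ≤ C := le_trans (by simp) (hC 0 h𝒞0)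
  have hCabs : ∀ π ∈ 𝒞, |π| ≤ C := fun π hπ => by
    simpa [Real.norm_eq_abs] using hC π hπ
  set B : ℝ := M + C * K with hBdef
  set D : ℝ := α * Real.exp (α * B) with hDdef
  have hD0 : 0 ≤ D := mul_nonneg hα.le (Real.exp_pos _).le
  set G : ℝ → ℝ := fun x => D * (2 * u x ^ 2 + 2 * C ^ 2 * β x ^ 2) with hGdef
  have hGint : Integrable G n :=
    ((hu2.const_mul 2).add (hβ2.const_mul (2 * C ^ 2))).const_mul D
  have hg0 : ∀ y : ℝ, 0 ≤ g α y := g_nonneg hα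
  have hρM0 : ∀ y, 0 ≤ ρM y := fun y => (hρM01 y).1
  have hρM1 : ∀ y, ρM y ≤ 1 := fun y => (hρM01 y).2
  have hae : ∀ᵐ x ∂n, ∀ π ∈ 𝒞, g α (u x - π * β x) ≤ G x := by
    filter_upwards [hub, hK] with x hxu hxβ
    intro π hπ
    have hπβ : |π * β x| ≤ C * K := by
      rw [abs_mul]
      exact mul_le_mul (hCabs π hπ) hxβ (abs_nonneg _) hC0
    have h1 : |u x - π * β x| ≤ B := by
      calc |u x - π * β x| ≤ |u x| + |π * β x| := abs_sub _ _
        _ ≤ M + C * K := add_le_add hxu hπβ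
    have h2 : g α (u x - π * β x) ≤ D * (u x - π * β x) ^ 2 := g_le hα h1
    refine h2.trans ?_
    have hπC := abs_le.mp (hCabs π hπ)
    have hC2 : 0 ≤ C ^ 2 - π ^ 2 := by nlinarith [hπC.1, hπC.2]
    have hsq : (u x - π * β x) ^ 2 ≤ 2 * u x ^ 2 + 2 * C ^ 2 * β x ^ 2 := by
      nlinarith [sq_nonneg (u x + π * β x), mul_nonneg (sq_nonneg (β x)) hC2]
    exact mul_le_mul_of_nonneg_left hsq hD0
  have hgmeas : ∀ π : ℝ, Measurable fun x => g α (u x - π * β x) := by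
    intro π
    have hc : Continuous (g α) := by
      unfold g
      fun_prop
    exact hc.measurable.comp (hum.sub (hβm.const_mul π))
  have hgint : ∀ π ∈ 𝒞, Integrable (fun x => g α (u x - π * β x)) n := by
    intro π hπ
    refine hGint.mono' (hgmeas π).aestronglyMeasurable ?_
    filter_upwards [hae] with x hx
    rw [Real.norm_eq_abs, abs_of_nonneg (hg0 _)]
    exact hx π hπ
  have hp0 : ∀ (π : ℝ) (x : ℝ), 0 ≤ g α (u x - π * β x) * ρM (u x) :=
    fun π x => mul_nonneg (hg0 _) (hρM0 _)
  have hp_le_g : ∀ (π : ℝ) (x : ℝ), g α (u x - π * β x) * ρM (u x) ≤ g α (u x - π * β x) :=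
    fun π x => mul_le_of_le_one_right (hg0 _) (hρM1 _)
  have hpmeas : ∀ π : ℝ, Measurable fun x => g α (u x - π * β x) * ρM (u x) :=
    fun π => (hgmeas π).mul (hρMc.measurable.comp hum)
  have hpint : ∀ π ∈ 𝒞, Integrable (fun x => g α (u x - π * β x) * ρM (u x)) n := by
    intro π hπ
    refine hGint.mono' (hpmeas π).aestronglyMeasurable ?_
    filter_upwards [hae] with x hx
    rw [Real.norm_eq_abs, abs_of_nonneg (hp0 π x)]
    exact (hp_le_g π x).trans (hx π hπ)
  set S : ℕ → Set ℝ := fun m => {x : ℝ | 1 / (m : ℝ) ≤ |x|} with hSdef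
  have hSmeas : ∀ m, MeasurableSet (S m) :=
    fun m => measurableSet_le measurable_const continuous_abs.measurable
  have hbddT : ∀ m : ℕ, 1 ≤ m → BddBelow ((fun π => α / 2 * (π * σ - (z + θ / α)) ^ 2 * ρ m z
      + ∫ x in S m, g α (u x - π * β x) * ρM (u x) ∂n) '' 𝒞) := by
    intro m hm
    refine ⟨0, ?_⟩
    rintro b ⟨π, hπ, rfl⟩
    have h1 : 0 ≤ α / 2 * (π * σ - (z + θ / α)) ^ 2 * ρ m z :=
      mul_nonneg (by positivity) (hρ01 m hm z).1
    have h2 : 0 ≤ ∫ x in S m, g α (u x - π * β x) * ρM (u x) ∂n :=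
      setIntegral_nonneg (hSmeas m) fun x _ => hp0 π x
    exact add_nonneg h1 h2
  have hbddF : BddBelow ((fun π => α / 2 * (π * σ - (z + θ / α)) ^ 2
      + ∫ x, g α (u x - π * β x) ∂n) '' 𝒞) := by
    refine ⟨0, ?_⟩
    rintro b ⟨π, hπ, rfl⟩
    exact add_nonneg (by positivity) (integral_nonneg fun x => hg0 _)
  constructor
  · -- monotonicity
    intro m hm
    have hm1 : (1 : ℝ) ≤ (m : ℝ) := by exact_mod_cast hm
    unfold genT
    apply sub_le_sub_right
    apply sub_le_sub_right
    refine le_csInf (h𝒞ne.image _) ?_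
    rintro b ⟨π, hπ, rfl⟩
    refine le_trans (csInf_le (hbddT m hm) ⟨π, hπ, rfl⟩) ?_
    have hsub : S m ⊆ S (m + 1) := by
      intro x hx
      simp only [hSdef, Set.mem_setOf_eq] at hx ⊢
      refine le_trans ?_ hx
      apply one_div_le_one_div_of_le (by linarith)
      push_cast
      linarith
    apply add_le_add
    · exact mul_le_mul_of_nonneg_left (hρmono m hm z) (by positivity)
    · exact setIntegral_mono_set ((hpint π hπ).integrableOn)
        (Filter.Eventually.of_forall fun x => hp0 π x) hsub.eventuallyLE
  · -- convergence
    set δ : ℕ → ℝ := fun m => (∫ x, G x ∂n) - ∫ x in S m, G x ∂n with hδdef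
    have hδtend : Filter.Tendsto δ Filter.atTop (nhds 0) := by
      have hmono : Monotone fun k : ℕ => S (k + 1) := by
        intro a b hab x hx
        simp only [hSdef, Set.mem_setOf_eq] at hx ⊢
        refine le_trans ?_ hx
        apply one_div_le_one_div_of_le (by positivity)
        push_cast
        exact_mod_cast by exact_mod_cast Nat.add_le_add_right hab 1
      have h1 := tendsto_setIntegral_of_monotone (f := G) (μ := n)
        (fun k : ℕ => hSmeas (k + 1)) hmono hGint.integrableOn
      have hunion : (⋃ k : ℕ, S (k + 1)) = ({(0:ℝ)}ᶜ : Set ℝ) := by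
        ext x
        simp only [Set.mem_iUnion, hSdef, Set.mem_setOf_eq, Set.mem_compl_iff,
          Set.mem_singleton_iff]
        constructor
        · rintro ⟨k, hk⟩ hx0
          rw [hx0] at hk
          simp at hk
          have : (0:ℝ) < 1 / ((k:ℝ) + 1) := by positivity
          push_cast at hk
          linarith
        · intro hx
          obtain ⟨k, hk⟩ := exists_nat_one_div_lt (abs_pos.2 hx)
          exact ⟨k, by push_cast; linarith⟩
      have heq : (∫ x in ⋃ k : ℕ, S (k + 1), G x ∂n) = ∫ x, G x ∂n := by
        rw [hunion]
        have hae0 : ({(0:ℝ)}ᶜ : Set ℝ) =ᵐ[n] (Set.univ : Set ℝ) :=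
          MeasureTheory.ae_eq_univ.2 (by rwa [compl_compl])
        rw [Measure.restrict_congr_set hae0, Measure.restrict_univ]
      rw [heq] at h1
      have h3 : Filter.Tendsto (fun m : ℕ => ∫ x in S m, G x ∂n) Filter.atTop
          (nhds (∫ x, G x ∂n)) := by
        rw [← Filter.tendsto_add_atTop_iff_nat 1]
        exact h1
      have := Filter.Tendsto.sub (tendsto_const_nhds (x := ∫ x, G x ∂n)
        (f := Filter.atTop (α := ℕ))) h3
      simpa using this
    obtain ⟨m₀, hm₀1, hm₀z⟩ : ∃ m₀ : ℕ, 1 ≤ m₀ ∧ |z| ≤ (m₀ : ℝ) := by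
      refine ⟨max 1 ⌈|z|⌉₊, le_max_left _ _, ?_⟩
      calc |z| ≤ (⌈|z|⌉₊ : ℝ) := Nat.le_ceil _
        _ ≤ ((max 1 ⌈|z|⌉₊ : ℕ) : ℝ) := by exact_mod_cast le_max_right _ _
    have hupper : ∀ m : ℕ, 1 ≤ m → genT α θ σ β 𝒞 n ρ ρM m z u ≤ gen α θ σ β 𝒞 n z u := by
      intro m hm
      unfold genT gen
      apply sub_le_sub_right
      apply sub_le_sub_right
      refine le_csInf (h𝒞ne.image _) ?_
      rintro b ⟨π, hπ, rfl⟩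
      refine le_trans (csInf_le (hbddT m hm) ⟨π, hπ, rfl⟩) ?_
      apply add_le_add
      · exact mul_le_of_le_one_right (by positivity) (hρ01 m hm z).2
      · calc (∫ x in S m, g α (u x - π * β x) * ρM (u x) ∂n)
            ≤ ∫ x in S m, g α (u x - π * β x) ∂n :=
              setIntegral_mono ((hpint π hπ).integrableOn) ((hgint π hπ).integrableOn)
                (fun x => hp_le_g π x)
          _ ≤ ∫ x, g α (u x - π * β x) ∂n :=
              setIntegral_le_integral (hgint π hπ) (Filter.Eventually.of_forall fun x => hg0 _)
    have hlower : ∀ m : ℕ, m₀ ≤ m →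
        gen α θ σ β 𝒞 n z u - δ m ≤ genT α θ σ β 𝒞 n ρ ρM m z u := by
      intro m hm
      have hm1 : 1 ≤ m := hm₀1.trans hm
      have hρz : ρ m z = 1 := hρone m hm1 z (hm₀z.trans (by exact_mod_cast hm))
      have hone : ∀ᵐ x ∂n, ρM (u x) = 1 := hub.mono fun x hx => hρMone _ hx
      unfold genT gen
      have key : ∀ π ∈ 𝒞, (α / 2 * (π * σ - (z + θ / α)) ^ 2 + ∫ x, g α (u x - π * β x) ∂n)
          ≤ (α / 2 * (π * σ - (z + θ / α)) ^ 2 * ρ m z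
            + ∫ x in S m, g α (u x - π * β x) * ρM (u x) ∂n) + δ m := by
        intro π hπ
        have e1 : (∫ x in S m, g α (u x - π * β x) * ρM (u x) ∂n)
            = ∫ x in S m, g α (u x - π * β x) ∂n := by
          refine integral_congr_ae ?_
          filter_upwards [ae_restrict_of_ae hone] with x hx
          rw [hx, mul_one]
        have e2 : (∫ x in S m, g α (u x - π * β x) ∂n)
            + (∫ x in (S m)ᶜ, g α (u x - π * β x) ∂n) = ∫ x, g α (u x - π * β x) ∂n :=
          integral_add_compl (hSmeas m) (hgint π hπ)
        have e3 : (∫ x in (S m)ᶜ, g α (u x - π * β x) ∂n) ≤ ∫ x in (S m)ᶜ, G x ∂n := by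
          refine integral_mono_ae ((hgint π hπ).integrableOn) (hGint.integrableOn) ?_
          filter_upwards [ae_restrict_of_ae hae] with x hx
          exact hx π hπ
        have e4 : (∫ x in S m, G x ∂n) + (∫ x in (S m)ᶜ, G x ∂n) = ∫ x, G x ∂n :=
          integral_add_compl (hSmeas m) hGint
        rw [hρz, mul_one, e1]
        simp only [hδdef]
        linarith
      have hstep : sInf ((fun π => α / 2 * (π * σ - (z + θ / α)) ^ 2
            + ∫ x, g α (u x - π * β x) ∂n) '' 𝒞) - δ m
          ≤ sInf ((fun π => α / 2 * (π * σ - (z + θ / α)) ^ 2 * ρ m z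
            + ∫ x in S m, g α (u x - π * β x) * ρM (u x) ∂n) '' 𝒞) := by
        refine le_csInf (h𝒞ne.image _) ?_
        rintro b ⟨π, hπ, rfl⟩
        have h := csInf_le hbddF ⟨π, hπ, rfl⟩
        have := key π hπ
        simp only at h this ⊢
        linarith
      linarith
    refine tendsto_of_tendsto_of_tendsto_of_le_of_le'
      (g := fun m : ℕ => gen α θ σ β 𝒞 n z u - δ m)
      (h := fun _ : ℕ => gen α θ σ β 𝒞 n z u) ?_ tendsto_const_nhds ?_ ?_
    · simpa using (tendsto_const_nhds (x := gen α θ σ β 𝒞 n z u)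
        (f := Filter.atTop (α := ℕ))).sub hδtend
    · exact Filter.eventually_atTop.2 ⟨m₀, fun m hm => hlower m hm⟩
    · exact Filter.eventually_atTop.2 ⟨m₀, fun m hm => hupper m (hm₀1.trans hm)⟩
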